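/- arXiv:1612.02852 — 3 statements merged into one kernel-verified Lean document; each statement's English description precedes it below -/
import Mathlib

section
/- Let a ≥ 0 and C ∈ ℝ, and let v : ℝ → ℝ be twice continuously differentiable on (a,∞) and satisfy, for all r > a, the radial Hamiltonian stationary ODE with n = 2: v''(r)/(1+v'(r)^2) + (r·v'(r) − v(r))/(r^2+v(r)^2) = C·(1+v'(r)^2)^{1/2}/(r^2+v(r)^2)^{1/2}. If the phase θ(r) = arctan(v'(r)) + arctan(v(r)/r) converges as r → ∞ to a limit L ≠ 0, then C = 0, i.e., the solution is special Lagrangian. -/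
/-!
Along a solution the phase satisfies `θ' = C √(1 + v'²) / |z|` with `z = (r, v r)`, while
`ρ = log |z|` satisfies `ρ' = ⟪(1, v'), z⟫ / |z|² ≤ √(1 + v'²) / |z|` by Cauchy–Schwarz. Hence
`C θ - C² ρ` is nondecreasing for large `r`. But `θ`, a sum of two arctangents, stays in
`[-π, π]`, whereas `ρ ≥ log r → ∞`; so `C² = 0`.
-/

open Real Set Filter

theorem eq_zero_of_sq_mul_deriv_le_mul_deriv {θ ρ θ' ρ' : ℝ → ℝ} {b C M : ℝ}
    (hθ : ∀ r > b, HasDerivAt θ (θ' r) r) (hρ : ∀ r > b, HasDerivAt ρ (ρ' r) r)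
    (hle : ∀ r > b, C ^ 2 * ρ' r ≤ C * θ' r) (hθ_bdd : ∀ r, |θ r| ≤ M)
    (hρ_top : Tendsto ρ atTop atTop) : C = 0 := by
  have hg (r) (hr : r > b) :
      HasDerivAt (fun r => C * θ r - C ^ 2 * ρ r) (C * θ' r - C ^ 2 * ρ' r) r :=
    ((hθ r hr).const_mul C).sub ((hρ r hr).const_mul (C ^ 2))
  have hmono : MonotoneOn (fun r => C * θ r - C ^ 2 * ρ r) (Ioi b) := by
    refine monotoneOn_of_hasDerivWithinAt_nonneg (f' := fun r => C * θ' r - C ^ 2 * ρ' r)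
      (convex_Ioi b) (fun r hr => (hg r hr).continuousAt.continuousWithinAt)
      (fun r hr => ?_) fun r hr => ?_ <;> rw [interior_Ioi] at hr
    · exact (hg r hr).hasDerivWithinAt
    · exact sub_nonneg.2 (hle r hr)
  have hCθ (r) : |C * θ r| ≤ |C| * M := by
    rw [abs_mul]
    exact mul_le_mul_of_nonneg_left (hθ_bdd r) (abs_nonneg C)
  by_contra hC
  have hC_sq : 0 < C ^ 2 := by positivity
  obtain ⟨R, hR, hR_large⟩ := ((eventually_ge_atTop (b + 1)).and
    ((hρ_top.const_mul_atTop hC_sq).eventually_gt_atTop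
      (C ^ 2 * ρ (b + 1) + 2 * (|C| * M)))).exists
  have hgR : C * θ (b + 1) - C ^ 2 * ρ (b + 1) ≤ C * θ R - C ^ 2 * ρ R :=
    hmono (by simp) (by simp only [mem_Ioi]; linarith) hR
  linarith [abs_le.1 (hCθ R), abs_le.1 (hCθ (b + 1))]

theorem add_mul_div_sq_add_sq_le (x y d : ℝ) (h : 0 < x ^ 2 + y ^ 2) :
    (x + y * d) / (x ^ 2 + y ^ 2) ≤ √(1 + d ^ 2) / √(x ^ 2 + y ^ 2) := by
  have hcs : x + y * d ≤ √(1 + d ^ 2) * √(x ^ 2 + y ^ 2) := by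
    rw [← sqrt_mul (by positivity)]
    exact (le_abs_self _).trans (abs_le_sqrt (by nlinarith [sq_nonneg (x * d - y)]))
  rw [div_le_div_iff₀ h (sqrt_pos.2 h)]
  nth_rewrite 2 [← sq_sqrt h.le]
  nlinarith [sqrt_nonneg (x ^ 2 + y ^ 2)]

noncomputable def radialPhase (v : ℝ → ℝ) (r : ℝ) : ℝ := arctan (deriv v r) + arctan (v r / r)

theorem abs_radialPhase_le (v : ℝ → ℝ) (r : ℝ) : |radialPhase v r| ≤ π := by
  rw [radialPhase, abs_le]
  constructor <;> linarith [arctan_lt_pi_div_two (deriv v r), neg_pi_div_two_lt_arctan (deriv v r),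
    arctan_lt_pi_div_two (v r / r), neg_pi_div_two_lt_arctan (v r / r)]

theorem hasDerivAt_radialPhase {v : ℝ → ℝ} {r : ℝ} (hv : DifferentiableAt ℝ v r)
    (hv' : DifferentiableAt ℝ (deriv v) r) (hr : r ≠ 0) :
    HasDerivAt (radialPhase v)
      (deriv (deriv v) r / (1 + deriv v r ^ 2) + (r * deriv v r - v r) / (r ^ 2 + v r ^ 2)) r := by
  have hquot : HasDerivAt (fun x => v x / x) ((deriv v r * r - v r * 1) / r ^ 2) r :=
    hv.hasDerivAt.div (hasDerivAt_id r) hr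
  refine (hv'.hasDerivAt.arctan.add hquot.arctan).congr_deriv ?_
  field_simp

theorem hasDerivAt_half_log_sq_add_sq {v : ℝ → ℝ} {v' r : ℝ} (hv : HasDerivAt v v' r)
    (hr : r ≠ 0) :
    HasDerivAt (fun x => log (x ^ 2 + v x ^ 2) / 2) ((r + v r * v') / (r ^ 2 + v r ^ 2)) r := by
  have hsq : HasDerivAt (fun x => x ^ 2 + v x ^ 2) (2 * r + 2 * v r * v') r :=
    ((hasDerivAt_pow 2 r).fun_add (hv.fun_pow 2)).congr_deriv (by ring)
  exact ((hsq.log (by positivity)).div_const 2).congr_deriv (by ring)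

theorem tendsto_half_log_sq_add_sq (v : ℝ → ℝ) :
    Tendsto (fun x => log (x ^ 2 + v x ^ 2) / 2) atTop atTop := by
  refine tendsto_atTop_mono' _ ?_ tendsto_log_atTop
  filter_upwards [eventually_gt_atTop 0] with x hx
  calc log x = log (x ^ 2) / 2 := by rw [log_pow]; push_cast; ring
    _ ≤ log (x ^ 2 + v x ^ 2) / 2 := by gcongr; exact le_add_of_nonneg_right (sq_nonneg _)

theorem eq_zero_of_radial_hamiltonian_stationary {a C : ℝ} {v : ℝ → ℝ}
    (hv : DifferentiableOn ℝ v (Ioi a)) (hv' : DifferentiableOn ℝ (deriv v) (Ioi a))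
    (hode : ∀ r ∈ Ioi a,
      deriv (deriv v) r / (1 + deriv v r ^ 2) + (r * deriv v r - v r) / (r ^ 2 + v r ^ 2)
        = C * √(1 + deriv v r ^ 2) / √(r ^ 2 + v r ^ 2)) :
    C = 0 := by
  have hlarge (r : ℝ) (hrb : r > max a 0) : r ∈ Ioi a ∧ r ≠ 0 :=
    ⟨(le_max_left a 0).trans_lt hrb, ((le_max_right a 0).trans_lt hrb).ne'⟩
  have hdiff {r : ℝ} (hra : r ∈ Ioi a) :
      DifferentiableAt ℝ v r ∧ DifferentiableAt ℝ (deriv v) r :=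
    ⟨hv.differentiableAt (isOpen_Ioi.mem_nhds hra), hv'.differentiableAt (isOpen_Ioi.mem_nhds hra)⟩
  refine eq_zero_of_sq_mul_deriv_le_mul_deriv (b := max a 0)
    (fun r hrb => hasDerivAt_radialPhase (hdiff (hlarge r hrb).1).1 (hdiff (hlarge r hrb).1).2
      (hlarge r hrb).2)
    (fun r hrb => hasDerivAt_half_log_sq_add_sq (hdiff (hlarge r hrb).1).1.hasDerivAt
      (hlarge r hrb).2)
    (fun r hrb => ?_) (abs_radialPhase_le v) (tendsto_half_log_sq_add_sq v)
  have hpos : 0 < r ^ 2 + v r ^ 2 := by have := (hlarge r hrb).2; positivity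
  rw [hode r (hlarge r hrb).1, mul_div_assoc, ← mul_assoc, ← sq]
  exact mul_le_mul_of_nonneg_left (add_mul_div_sq_add_sq_le r (v r) (deriv v r) hpos) (sq_nonneg C)

theorem radial_hamiltonian_stationary_dim_two_nonzero_phase_limit_general
    (a C : ℝ) (v : ℝ → ℝ)
    (hv : ContDiffOn ℝ 2 v (Set.Ioi a))
    (hode : ∀ r ∈ Set.Ioi a,
      deriv (deriv v) r / (1 + (deriv v r) ^ 2)
        + (r * deriv v r - v r) / (r ^ 2 + (v r) ^ 2)
        = C * Real.sqrt (1 + (deriv v r) ^ 2) / Real.sqrt (r ^ 2 + (v r) ^ 2)) :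
    C = 0 :=
  eq_zero_of_radial_hamiltonian_stationary (hv.differentiableOn (by norm_num))
    ((hv.deriv_of_isOpen isOpen_Ioi (m := 1) (by norm_num)).differentiableOn one_ne_zero) hode

/-- (Proposition `easy proof` of Chen–Warren.)
If `v` is twice continuously differentiable on `(a, ∞)` (`a ≥ 0`) and solves the
radial Hamiltonian stationary ODE with `n = 2`, and the phase
`θ(r) = arctan v'(r) + arctan (v(r)/r)` converges as `r → ∞` to a nonzero limit `L`,
then `C = 0`, i.e. the solution is special Lagrangian. -/
theorem radial_hamiltonian_stationary_dim_two_nonzero_phase_limit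
    (a C L : ℝ) (ha : 0 ≤ a) (v : ℝ → ℝ)
    (hv : ContDiffOn ℝ 2 v (Set.Ioi a))
    (hode : ∀ r ∈ Set.Ioi a,
      deriv (deriv v) r / (1 + (deriv v r) ^ 2)
        + (r * deriv v r - v r) / (r ^ 2 + (v r) ^ 2)
        = C * Real.sqrt (1 + (deriv v r) ^ 2) / Real.sqrt (r ^ 2 + (v r) ^ 2))
    (hlim : Filter.Tendsto
      (fun r => Real.arctan (deriv v r) + Real.arctan (v r / r))
      Filter.atTop (nhds L))
    (hL : L ≠ 0) :
    C = 0 :=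
  radial_hamiltonian_stationary_dim_two_nonzero_phase_limit_general a C v hv hode
end

section
/- Let n ≥ 2 be an integer, R > 0, and C ∈ ℝ with C ≠ 0. If v : ℝ → ℝ is twice continuously differentiable on (0,R) and satisfies the radial Hamiltonian stationary ODE v''(r)/(1+v'(r)^2) + (n−1)(r·v'(r) − v(r))/(r^2+v(r)^2) = C·(1+v'(r)^2)^{1/2}/(r^2+v(r)^2)^{(n−1)/2} for all r ∈ (0,R), then it is not the case that v(r) → 0 as r → 0⁺. -/
/-!
Along a solution, the Lagrangian angle `θ = arctan v' + (n - 1) arctan (v / r)` of the graph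
satisfies `θ' = C √(1 + v'²) / (r² + v²)^((n-1)/2)`, while Cauchy–Schwarz gives
`(log (r² + v²))' ≤ 2 √(1 + v'²) / √(r² + v²)`. Where `r² + v² < 1` and `n ≥ 2` the latter is at
most `(2 / C) θ'`, so `(2 / C) θ - log (r² + v²)` is monotone near `0`. Since `θ` is bounded,
`log (r² + v²)` is then bounded below near `0`, which is impossible if `v(r) → 0`.
-/

open Real Filter Set Topology

lemma sq_add_sq_pos_of_ne_zero {r : ℝ} (w : ℝ) (hr : r ≠ 0) : 0 < r ^ 2 + w ^ 2 := by
  have := sq_pos_of_ne_zero hr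
  positivity

noncomputable def lagrangianAngle (k : ℝ) (v : ℝ → ℝ) (r : ℝ) : ℝ :=
  arctan (deriv v r) + k * arctan (v r / r)

lemma abs_lagrangianAngle_le (k : ℝ) (v : ℝ → ℝ) (r : ℝ) :
    |lagrangianAngle k v r| ≤ (1 + |k|) * (π / 2) := by
  have habs (x : ℝ) : |arctan x| ≤ π / 2 :=
    (abs_lt.mpr ⟨neg_pi_div_two_lt_arctan x, arctan_lt_pi_div_two x⟩).le
  calc |lagrangianAngle k v r|
      ≤ |arctan (deriv v r)| + |k| * |arctan (v r / r)| := by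
        rw [lagrangianAngle, ← abs_mul]; exact abs_add_le _ _
    _ ≤ π / 2 + |k| * (π / 2) := by gcongr <;> exact habs _
    _ = (1 + |k|) * (π / 2) := by ring

lemma hasDerivAt_lagrangianAngle {k r v'' : ℝ} {v : ℝ → ℝ} (hr : r ≠ 0)
    (hv : HasDerivAt v (deriv v r) r) (hv' : HasDerivAt (deriv v) v'' r) :
    HasDerivAt (lagrangianAngle k v)
      (v'' / (1 + deriv v r ^ 2) + k * (r * deriv v r - v r) / (r ^ 2 + v r ^ 2)) r := by
  refine (hv'.arctan.fun_add ((hv.fun_div (hasDerivAt_id' r) hr).arctan.const_mul k)).congr_deriv ?_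
  have : r ^ 2 + v r ^ 2 ≠ 0 := (sq_add_sq_pos_of_ne_zero (v r) hr).ne'
  field_simp

lemma hasDerivAt_log_sq_add_sq {v : ℝ → ℝ} {r a : ℝ} (hr : r ≠ 0) (hv : HasDerivAt v a r) :
    HasDerivAt (fun x => log (x ^ 2 + v x ^ 2))
      ((2 * r + 2 * v r * a) / (r ^ 2 + v r ^ 2)) r := by
  convert (((hasDerivAt_id' r).fun_pow 2).fun_add (hv.fun_pow 2)).log
    (sq_add_sq_pos_of_ne_zero (v r) hr).ne' using 2
  ring

lemma two_mul_add_div_le_of_le_one {r w a : ℝ} {m : ℕ} (hm : 1 ≤ m)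
    (hf : 0 < r ^ 2 + w ^ 2) (hf1 : r ^ 2 + w ^ 2 ≤ 1) :
    (2 * r + 2 * w * a) / (r ^ 2 + w ^ 2) ≤ 2 * √(1 + a ^ 2) / √((r ^ 2 + w ^ 2) ^ m) := by
  set f := r ^ 2 + w ^ 2
  have hcs : r + w * a ≤ √f * √(1 + a ^ 2) := by
    rw [← sqrt_mul hf.le]
    exact (le_abs_self _).trans (abs_le_sqrt (by nlinarith [sq_nonneg (r * a - w)]))
  have hpow : √(f ^ m) ≤ √f := sqrt_le_sqrt (pow_le_of_le_one hf.le hf1 (by omega))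
  calc (2 * r + 2 * w * a) / f ≤ 2 * (√f * √(1 + a ^ 2)) / f := by gcongr; linarith
    _ = 2 * √(1 + a ^ 2) / √f := by
        field_simp
        exact sq_sqrt hf.le
    _ ≤ 2 * √(1 + a ^ 2) / √(f ^ m) := by gcongr

lemma monotoneOn_sub_of_hasDerivAt_le {g L g' L' : ℝ → ℝ} {a b : ℝ}
    (hg : ∀ x ∈ Ioo a b, HasDerivAt g (g' x) x) (hL : ∀ x ∈ Ioo a b, HasDerivAt L (L' x) x)
    (hle : ∀ x ∈ Ioo a b, L' x ≤ g' x) : MonotoneOn (fun x => g x - L x) (Ioo a b) := by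
  have hsub (x) (hx : x ∈ Ioo a b) := (hg x hx).fun_sub (hL x hx)
  refine monotoneOn_of_hasDerivWithinAt_nonneg (f' := fun x => g' x - L' x) (convex_Ioo a b)
    (fun x hx => (hsub x hx).continuousAt.continuousWithinAt) (fun x hx => ?_) (fun x hx => ?_)
  · rw [interior_Ioo] at hx ⊢
    exact (hsub x hx).hasDerivWithinAt
  · rw [interior_Ioo] at hx
    exact sub_nonneg.mpr (hle x hx)

lemma not_tendsto_atBot_of_monotoneOn_sub {g L : ℝ → ℝ} {δ M : ℝ} (hδ : 0 < δ)
    (hg : ∀ x, M ≤ g x) (hmono : MonotoneOn (fun x => g x - L x) (Ioo 0 δ)) :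
    ¬ Tendsto L (𝓝[>] 0) atBot := by
  intro hL
  have hb : δ / 2 ∈ Ioo 0 δ := ⟨by positivity, by linarith⟩
  obtain ⟨r, hr, hr_mem⟩ :=
    ((hL.eventually (eventually_lt_atBot (M - (g (δ / 2) - L (δ / 2))))).and
      (Ioo_mem_nhdsGT hb.1)).exists
  have := hmono ⟨hr_mem.1, hr_mem.2.trans hb.2⟩ hb hr_mem.2.le
  linarith [hg r]

lemma tendsto_sq_add_sq_nhdsGT_zero {v : ℝ → ℝ} (hv : Tendsto v (𝓝[>] 0) (𝓝 0)) :
    Tendsto (fun x => x ^ 2 + v x ^ 2) (𝓝[>] 0) (𝓝 0) := by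
  have hid : Tendsto (fun x : ℝ => x) (𝓝[>] 0) (𝓝 0) :=
    tendsto_nhdsWithin_of_tendsto_nhds tendsto_id
  simpa using (hid.pow 2).add (hv.pow 2)

lemma tendsto_log_sq_add_sq_atBot {v : ℝ → ℝ} (hv : Tendsto v (𝓝[>] 0) (𝓝 0)) :
    Tendsto (fun x => log (x ^ 2 + v x ^ 2)) (𝓝[>] 0) atBot := by
  refine tendsto_log_nhdsNE_zero.comp
    (tendsto_nhdsWithin_of_tendsto_nhds_of_eventually_within _
      (tendsto_sq_add_sq_nhdsGT_zero hv) ?_)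
  filter_upwards [self_mem_nhdsWithin] with x (hx : 0 < x)
  exact (sq_add_sq_pos_of_ne_zero (v x) hx.ne').ne'

lemma monotoneOn_two_div_mul_sub_log_sq_add_sq {θ v : ℝ → ℝ} {C δ : ℝ} {m : ℕ}
    (hC : C ≠ 0) (hm : 1 ≤ m)
    (hθ : ∀ r ∈ Ioo 0 δ, HasDerivAt θ (C * √(1 + deriv v r ^ 2) / √((r ^ 2 + v r ^ 2) ^ m)) r)
    (hv : ∀ r ∈ Ioo 0 δ, HasDerivAt v (deriv v r) r)
    (hsmall : ∀ r ∈ Ioo 0 δ, r ^ 2 + v r ^ 2 < 1) :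
    MonotoneOn (fun r => 2 / C * θ r - log (r ^ 2 + v r ^ 2)) (Ioo 0 δ) := by
  refine monotoneOn_sub_of_hasDerivAt_le (fun r hr => (hθ r hr).const_mul (2 / C))
    (fun r hr => hasDerivAt_log_sq_add_sq hr.1.ne' (hv r hr)) (fun r hr => ?_)
  convert two_mul_add_div_le_of_le_one hm (sq_add_sq_pos_of_ne_zero (v r) hr.1.ne')
    (hsmall r hr).le using 1
  field_simp

lemma hasDerivAt_deriv_deriv_of_contDiffOn {v : ℝ → ℝ} {s : Set ℝ} (hs : IsOpen s)
    (hv : ContDiffOn ℝ 2 v s) {r : ℝ} (hr : r ∈ s) :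
    HasDerivAt v (deriv v r) r ∧ HasDerivAt (deriv v) (deriv (deriv v) r) r :=
  ⟨((hv.differentiableOn (by norm_num)).differentiableAt (hs.mem_nhds hr)).hasDerivAt,
    (((hv.deriv_of_isOpen (m := 1) hs (by norm_num)).differentiableOn (by norm_num))
      |>.differentiableAt (hs.mem_nhds hr)).hasDerivAt⟩

/-- (Corollary `initial` of Chen–Warren.)
If `v` is twice continuously differentiable on `(0,R)` and solves the radial
Hamiltonian stationary ODE with `C ≠ 0`, then `v(r)` does not tend to `0` as `r → 0⁺`. -/
theorem radial_solution_nonzero_C_no_zero_limit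
    (n : ℕ) (hn : 2 ≤ n) (R C : ℝ) (hR : 0 < R) (hC : C ≠ 0)
    (v : ℝ → ℝ) (hv : ContDiffOn ℝ 2 v (Set.Ioo 0 R))
    (hode : ∀ r ∈ Set.Ioo (0 : ℝ) R,
      deriv (deriv v) r / (1 + (deriv v r) ^ 2)
        + ((n : ℝ) - 1) * (r * deriv v r - v r) / (r ^ 2 + (v r) ^ 2)
        = C * Real.sqrt (1 + (deriv v r) ^ 2)
            / Real.sqrt ((r ^ 2 + (v r) ^ 2) ^ (n - 1))) :
    ¬ Filter.Tendsto v (nhdsWithin 0 (Set.Ioi 0)) (nhds 0) := by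
  intro hlim
  obtain ⟨δ₀, hδ₀, hsmall⟩ := mem_nhdsGT_iff_exists_Ioo_subset.mp
    (tendsto_sq_add_sq_nhdsGT_zero hlim (Iio_mem_nhds one_pos))
  have hδ : Ioo 0 (min δ₀ R) ⊆ Ioo 0 δ₀ ∩ Ioo 0 R :=
    subset_inter (Ioo_subset_Ioo_right (min_le_left _ _)) (Ioo_subset_Ioo_right (min_le_right _ _))
  have hderiv (r) (hr : r ∈ Ioo 0 (min δ₀ R)) :=
    hasDerivAt_deriv_deriv_of_contDiffOn isOpen_Ioo hv (hδ hr).2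
  have hθ (r) (hr : r ∈ Ioo 0 (min δ₀ R)) : HasDerivAt (lagrangianAngle (n - 1) v)
      (C * √(1 + deriv v r ^ 2) / √((r ^ 2 + v r ^ 2) ^ (n - 1))) r := by
    rw [← hode r (hδ hr).2]
    exact hasDerivAt_lagrangianAngle hr.1.ne' (hderiv r hr).1 (hderiv r hr).2
  have hmono := monotoneOn_two_div_mul_sub_log_sq_add_sq hC (by omega) hθ
    (fun r hr => (hderiv r hr).1) (fun r hr => hsmall (hδ hr).1)
  have hbdd (x : ℝ) : -(|2 / C| * ((1 + |(n : ℝ) - 1|) * (π / 2))) ≤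
      2 / C * lagrangianAngle (n - 1) v x :=
    neg_le_of_abs_le ((abs_mul _ _).trans_le
      (mul_le_mul_of_nonneg_left (abs_lagrangianAngle_le _ _ _) (abs_nonneg _)))
  exact not_tendsto_atBot_of_monotoneOn_sub (lt_min hδ₀ hR) hbdd hmono
    (tendsto_log_sq_add_sq_atBot hlim)
end

section
/- Let λ ≥ 2 be real, T ∈ (0,∞], and let v : [0,T) → ℝ be twice continuously differentiable with v(0) = 1, v'(0) = 1, satisfying v''(r) = −λ·[ (1+v'(r)^2)^{1/2}/(r^2+v(r)^2)^{λ/2} + (r·v'(r) − v(r))/(r^2+v(r)^2) ]·(1+v'(r)^2) for all r ∈ [0,T). Then there exists δ₀ ∈ (0, 1/√λ) such that for every δ with 0 < δ < min(δ₀, T): v(r) − δ·v'(r) > 0 for all r ∈ [δ, T), and consequently v(r) ≤ v(δ)·e^{r/δ} and v'(r) ≤ (v(δ)/δ)·e^{r/δ} for all r ∈ [δ, T). In particular, v and v' remain bounded on any bounded subinterval, so the solution extends past any finite time. -/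
/-!
The proof is a first-zero argument applied twice. At a first zero `x > 0` of `v'` the
function `v` has increased, so `v x > 1`, and then `λ ≥ 2` makes `v''(x) = G_λ(x, v, 0) > 0`;
hence `v' > 0` and `v ≥ 1`. For small `δ`, `w = v - δ v'` is positive at `δ` because `v ≥ 1`
and `v' ≈ 1` near `0`. At a first zero `x ≥ δ` of `w`, `x v' - v = (x - δ) v' ≥ 0`, so
`v''(x) < 0` and `w'(x) = v' - δ v'' > 0`, which is impossible; thus `w > 0` on `[δ, T)`.
Finally `v' < v / δ`, and Grönwall's inequality gives `v r ≤ v δ · e^{(r - δ)/δ}`.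
-/

open Set Filter

theorem exists_first_zero_of_pos_left {f : ℝ → ℝ} {a b : ℝ} (hf : ContinuousOn f (Icc a b))
    (ha : 0 < f a) (hnonpos : ∃ x ∈ Icc a b, f x ≤ 0) :
    ∃ s ∈ Ioc a b, f s = 0 ∧ ∀ y ∈ Ico a s, 0 < f y := by
  obtain ⟨x, hx, hfx⟩ := hnonpos
  set S := Icc a b ∩ f ⁻¹' Iic 0
  have hbdd : BddBelow S := ⟨a, fun y hy => hy.1.1⟩
  obtain ⟨⟨has, hsb⟩, hfs⟩ : sInf S ∈ S :=
    (hf.preimage_isClosed_of_isClosed isClosed_Icc isClosed_Iic).csInf_mem ⟨x, hx, hfx⟩ hbdd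
  have hpos : ∀ y ∈ Ico a (sInf S), 0 < f y := fun y hy =>
    not_le.1 fun h => (csInf_le hbdd ⟨⟨hy.1, hy.2.le.trans hsb⟩, h⟩).not_gt hy.2
  have has' : a < sInf S := has.lt_of_ne fun h => (h ▸ hfs : f a ≤ 0).not_gt ha
  refine ⟨sInf S, ⟨has', hsb⟩, le_antisymm hfs ?_, hpos⟩
  have := right_nhdsWithin_Ico_neBot has'
  exact ge_of_tendsto
    ((hf _ ⟨has, hsb⟩).mono (Ico_subset_Icc_self.trans (Icc_subset_Icc_right hsb)))
    (eventually_nhdsWithin_of_forall fun y hy => (hpos y hy).le)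

theorem HasDerivWithinAt.nonpos_of_eq_zero_of_pos_on_Ico {f : ℝ → ℝ} {f' a s : ℝ}
    (hf : HasDerivWithinAt f f' (Ico a s) s) (has : a < s) (hfs : f s = 0)
    (hpos : ∀ y ∈ Ico a s, 0 < f y) : f' ≤ 0 := by
  have := right_nhdsWithin_Ico_neBot has
  refine le_of_tendsto ((hasDerivWithinAt_iff_tendsto_slope' fun h => h.2.false).1 hf)
    (eventually_nhdsWithin_of_forall fun y hy => ?_)
  rw [slope_def_field, hfs, sub_zero]
  exact (div_neg_of_pos_of_neg (hpos y hy) (sub_neg.2 hy.2)).le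

theorem pos_on_Icc_of_deriv_pos_at_first_zero {f f' : ℝ → ℝ} {a b : ℝ}
    (hf : ∀ x ∈ Icc a b, HasDerivWithinAt f (f' x) (Icc a b) x) (ha : 0 < f a)
    (hzero : ∀ x ∈ Ioc a b, f x = 0 → (∀ y ∈ Ico a x, 0 < f y) → 0 < f' x) :
    ∀ x ∈ Icc a b, 0 < f x := by
  by_contra! h
  obtain ⟨s, hs, hfs, hpos⟩ :=
    exists_first_zero_of_pos_left (fun x hx => (hf x hx).continuousWithinAt) ha h
  have hsub : Ico a s ⊆ Icc a b := Ico_subset_Icc_self.trans (Icc_subset_Icc_right hs.2)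
  exact (hzero s hs hfs hpos).not_ge
    (((hf s (Ioc_subset_Icc_self hs)).mono hsub).nonpos_of_eq_zero_of_pos_on_Ico hs.1 hfs hpos)

theorem strictMonoOn_Icc_of_hasDerivWithinAt_pos {f f' : ℝ → ℝ} {a b : ℝ}
    (hf : ∀ x ∈ Icc a b, HasDerivWithinAt f (f' x) (Icc a b) x)
    (hpos : ∀ x ∈ Ioo a b, 0 < f' x) : StrictMonoOn f (Icc a b) :=
  strictMonoOn_of_hasDerivWithinAt_pos (convex_Icc a b)
    (fun x hx => (hf x hx).continuousWithinAt)
    (fun x hx => (hf x (interior_subset hx)).mono interior_subset)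
    (fun x hx => hpos x (by rwa [interior_Icc] at hx))

theorem le_mul_exp_of_deriv_le_mul {f f' : ℝ → ℝ} {a b K : ℝ}
    (hf : ∀ x ∈ Icc a b, HasDerivWithinAt f (f' x) (Icc a b) x)
    (bound : ∀ x ∈ Ico a b, f' x ≤ K * f x) :
    ∀ x ∈ Icc a b, f x ≤ f a * Real.exp (K * (x - a)) := by
  intro x hx
  rw [← gronwallBound_ε0]
  refine le_gronwallBound_of_liminf_deriv_right_le (fun x hx => (hf x hx).continuousWithinAt)
    (fun y hy r hr => ?_) le_rfl (by simpa using bound) x hx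
  exact ((hf y (Ico_subset_Icc_self hy)).mono_of_mem_nhdsWithin
    (mem_of_superset (Icc_mem_nhdsGE hy.2) (Icc_subset_Icc_left hy.1))).liminf_right_slope_le hr

noncomputable def radialHamiltonianRHS (l r v p : ℝ) : ℝ :=
  -l * (Real.sqrt (1 + p ^ 2) / (r ^ 2 + v ^ 2) ^ (l / 2) + (r * p - v) / (r ^ 2 + v ^ 2)) *
    (1 + p ^ 2)

theorem radialHamiltonianRHS_zero_pos {l r v : ℝ} (hl : 2 ≤ l) (hr : 0 ≤ r) (hv : 1 < v) :
    0 < radialHamiltonianRHS l r v 0 := by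
  set X := r ^ 2 + v ^ 2
  have hX : 1 < X := by nlinarith
  have hXpow : X ≤ X ^ (l / 2) := by
    simpa using Real.rpow_le_rpow_of_exponent_le hX.le (by linarith : (1 : ℝ) ≤ l / 2)
  have : 1 / X ^ (l / 2) < v / X := calc
    1 / X ^ (l / 2) ≤ 1 / X := by gcongr
    _ < v / X := by gcongr
  have hrhs : radialHamiltonianRHS l r v 0 = l * (v / X - 1 / X ^ (l / 2)) := by
    simp only [radialHamiltonianRHS, X]; norm_num; ring
  rw [hrhs]
  exact mul_pos (by linarith) (by linarith)

theorem radialHamiltonianRHS_neg {l r v p : ℝ} (hl : 0 < l) (hX : 0 < r ^ 2 + v ^ 2)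
    (hp : v ≤ r * p) : radialHamiltonianRHS l r v p < 0 := by
  have : 0 < Real.sqrt (1 + p ^ 2) / (r ^ 2 + v ^ 2) ^ (l / 2) + (r * p - v) / (r ^ 2 + v ^ 2) :=
    add_pos_of_pos_of_nonneg (by positivity) (div_nonneg (by linarith) hX.le)
  have : 0 < 1 + p ^ 2 := by positivity
  simp only [radialHamiltonianRHS, neg_mul]
  exact neg_neg_of_pos (by positivity)

structure IsRadialHamiltonianSolutionOn (l : ℝ) (v v' v'' : ℝ → ℝ) (s : Set ℝ) :
    Prop where
  hasDerivWithinAt : ∀ x ∈ s, HasDerivWithinAt v (v' x) s x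
  hasDerivWithinAt' : ∀ x ∈ s, HasDerivWithinAt v' (v'' x) s x
  eq_rhs : ∀ x ∈ s, v'' x = radialHamiltonianRHS l x (v x) (v' x)

namespace IsRadialHamiltonianSolutionOn

variable {l : ℝ} {v v' v'' : ℝ → ℝ} {s t : Set ℝ}

theorem mono (h : IsRadialHamiltonianSolutionOn l v v' v'' s) (hts : t ⊆ s) :
    IsRadialHamiltonianSolutionOn l v v' v'' t where
  hasDerivWithinAt x hx := (h.hasDerivWithinAt x (hts hx)).mono hts
  hasDerivWithinAt' x hx := (h.hasDerivWithinAt' x (hts hx)).mono hts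
  eq_rhs x hx := h.eq_rhs x (hts hx)

theorem deriv_pos {b : ℝ} (h : IsRadialHamiltonianSolutionOn l v v' v'' (Icc 0 b)) (hl : 2 ≤ l)
    (h0 : v 0 = 1) (h0' : v' 0 = 1) : ∀ x ∈ Icc 0 b, 0 < v' x := by
  refine pos_on_Icc_of_deriv_pos_at_first_zero h.hasDerivWithinAt' (h0' ▸ one_pos)
    fun x hx hzero hpos => ?_
  have hmono : StrictMonoOn v (Icc 0 x) :=
    strictMonoOn_Icc_of_hasDerivWithinAt_pos (h.mono (Icc_subset_Icc_right hx.2)).hasDerivWithinAt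
      fun y hy => hpos y (Ioo_subset_Ico_self hy)
  have hvx : 1 < v x := h0 ▸ hmono (left_mem_Icc.2 hx.1.le) (right_mem_Icc.2 hx.1.le) hx.1
  rw [h.eq_rhs x (Ioc_subset_Icc_self hx), hzero]
  exact radialHamiltonianRHS_zero_pos hl hx.1.le hvx

theorem one_le {b : ℝ} (h : IsRadialHamiltonianSolutionOn l v v' v'' (Icc 0 b)) (hl : 2 ≤ l)
    (h0 : v 0 = 1) (h0' : v' 0 = 1) : ∀ x ∈ Icc 0 b, 1 ≤ v x := fun _ hx =>
  h0 ▸ (strictMonoOn_Icc_of_hasDerivWithinAt_pos h.hasDerivWithinAt fun y hy =>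
    h.deriv_pos hl h0 h0' y (Ioo_subset_Icc_self hy)).monotoneOn
      (left_mem_Icc.2 (hx.1.trans hx.2)) hx hx.1

theorem sub_mul_deriv_pos {δ b : ℝ} (h : IsRadialHamiltonianSolutionOn l v v' v'' (Icc δ b))
    (hl : 0 < l) (hδ : 0 < δ) (hpos : ∀ x ∈ Icc δ b, 0 < v' x)
    (hδpos : 0 < v δ - δ * v' δ) :
    ∀ x ∈ Icc δ b, 0 < v x - δ * v' x := by
  refine pos_on_Icc_of_deriv_pos_at_first_zero
    (fun x hx => (h.hasDerivWithinAt x hx).sub ((h.hasDerivWithinAt' x hx).const_mul δ)) hδpos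
    fun x hx hzero _ => ?_
  have hx' := Ioc_subset_Icc_self hx
  have hp := hpos x hx'
  have hvx : v x = δ * v' x := by linarith [show v x - δ * v' x = 0 from hzero]
  have hneg : v'' x < 0 := by
    rw [h.eq_rhs x hx']
    exact radialHamiltonianRHS_neg hl (by rw [hvx]; positivity) (by rw [hvx]; nlinarith [hx.1])
  nlinarith

theorem exponential_bound {δ r : ℝ} (h : IsRadialHamiltonianSolutionOn l v v' v'' (Icc 0 r))
    (hl : 2 ≤ l) (h0 : v 0 = 1) (h0' : v' 0 = 1) (hδ : 0 < δ) (hδr : δ ≤ r)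
    (hδpos : 0 < v δ - δ * v' δ) :
    0 < v r - δ * v' r ∧ v r ≤ v δ * Real.exp (r / δ) ∧
      v' r ≤ (v δ / δ) * Real.exp (r / δ) := by
  have hsub : Icc δ r ⊆ Icc 0 r := Icc_subset_Icc_left hδ.le
  have hw := (h.mono hsub).sub_mul_deriv_pos (by linarith) hδ
    (fun x hx => h.deriv_pos hl h0 h0' x (hsub hx)) hδpos
  have hwr := hw r ⟨hδr, le_rfl⟩
  have hvr : v r ≤ v δ * Real.exp (r / δ) := calc
    v r ≤ v δ * Real.exp (1 / δ * (r - δ)) :=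
      le_mul_exp_of_deriv_le_mul (h.mono hsub).hasDerivWithinAt (fun x hx => by
        rw [one_div_mul_eq_div, le_div_iff₀ hδ]; linarith [hw x (Ico_subset_Icc_self hx)])
        r ⟨hδr, le_rfl⟩
    _ ≤ v δ * Real.exp (r / δ) := by
      have := h.one_le hl h0 h0' δ ⟨hδ.le, hδr⟩
      rw [one_div_mul_eq_div]; gcongr; linarith
  refine ⟨hwr, hvr, ?_⟩
  rw [div_mul_eq_mul_div, le_div_iff₀ hδ]
  linarith

end IsRadialHamiltonianSolutionOn

theorem solution_exponential_bound_general
    (l : ℝ) (hl : 2 ≤ l) (T : EReal) (hT : 0 < T)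
    (v v' v'' : ℝ → ℝ)
    (I : Set ℝ) (hI : I = {r : ℝ | 0 ≤ r ∧ (r : EReal) < T})
    (hd1 : ∀ r ∈ I, HasDerivWithinAt v (v' r) I r)
    (hd2 : ∀ r ∈ I, HasDerivWithinAt v' (v'' r) I r)
    (h0 : v 0 = 1) (h0' : v' 0 = 1)
    (hode : ∀ r ∈ I, v'' r
      = -l * (Real.sqrt (1 + (v' r) ^ 2) / (r ^ 2 + (v r) ^ 2) ^ (l / 2)
            + (r * v' r - v r) / (r ^ 2 + (v r) ^ 2)) * (1 + (v' r) ^ 2)) :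
    ∃ δ₀ : ℝ, 0 < δ₀ ∧ δ₀ < 1 / Real.sqrt l ∧
      ∀ δ : ℝ, 0 < δ → δ < δ₀ → (δ : EReal) < T →
        ∀ r ∈ I, δ ≤ r →
          0 < v r - δ * v' r ∧
          v r ≤ v δ * Real.exp (r / δ) ∧
          v' r ≤ (v δ / δ) * Real.exp (r / δ) := by
  subst hI
  have hsol : IsRadialHamiltonianSolutionOn l v v' v'' _ := ⟨hd1, hd2, hode⟩
  obtain ⟨δ₁, hδ₁, hv'lt⟩ :
      ∃ δ₁ > (0 : ℝ), ∀ x : ℝ, 0 ≤ x → (x : EReal) < T → x < δ₁ → v' x < 2 := by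
    obtain ⟨δ₁, hδ₁, h⟩ := Metric.continuousWithinAt_iff.1
      (hd2 0 ⟨le_rfl, mod_cast hT⟩).continuousWithinAt 1 one_pos
    refine ⟨δ₁, hδ₁, fun x hx hxT hxδ => ?_⟩
    have := h ⟨hx, hxT⟩ (by rwa [Real.dist_0_eq_abs, abs_of_nonneg hx])
    rw [h0', Real.dist_eq, abs_lt] at this
    linarith
  have hsqrt : 1 ≤ Real.sqrt l := Real.one_le_sqrt.2 (by linarith)
  refine ⟨min δ₁ (1 / Real.sqrt l / 2), by positivity,
    (min_le_right _ _).trans_lt (half_lt_self (by positivity)),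
    fun δ hδ hδδ₀ hδT r hr hδr => ?_⟩
  have hsol₀ : IsRadialHamiltonianSolutionOn l v v' v'' (Icc 0 r) :=
    hsol.mono fun x hx => ⟨hx.1, (EReal.coe_le_coe_iff.2 hx.2).trans_lt hr.2⟩
  have hδr' : δ ∈ Icc 0 r := ⟨hδ.le, hδr⟩
  have hv'δ : v' δ < 2 := hv'lt δ hδ.le hδT (hδδ₀.trans_le (min_le_left _ _))
  have hδhalf : δ < 1 / 2 := hδδ₀.trans_le <| (min_le_right _ _).trans <| by
    gcongr; exact div_le_one_of_le₀ hsqrt (by positivity)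
  exact hsol₀.exponential_bound hl h0 h0' hδ hδr
    (by nlinarith [hsol₀.one_le hl h0 h0' δ hδr', hsol₀.deriv_pos hl h0 h0' δ hδr'])

/-- (Growth bound from the proof of Proposition `prop41` of
Chen–Warren.)  Let `λ ≥ 2`, `T ∈ (0,∞]`, and let `v : [0,T) → ℝ` be twice
continuously differentiable with `v(0) = 1`, `v'(0) = 1`, solving
`v'' = −λ [√(1+(v')²)/(r²+v²)^{λ/2} + (r v' − v)/(r²+v²)] (1+(v')²)` on `[0,T)`.
Then there is `δ₀ ∈ (0, 1/√λ)` such that for every `0 < δ < min(δ₀, T)`: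
`v − δ v' > 0` on `[δ,T)`, hence `v(r) ≤ v(δ) e^{r/δ}` and
`v'(r) ≤ (v(δ)/δ) e^{r/δ}` on `[δ,T)`; in particular `v, v'` stay bounded on
bounded subintervals. -/
theorem solution_exponential_bound
    (l : ℝ) (hl : 2 ≤ l) (T : EReal) (hT : 0 < T)
    (v v' v'' : ℝ → ℝ)
    (I : Set ℝ) (hI : I = {r : ℝ | 0 ≤ r ∧ (r : EReal) < T})
    (hd1 : ∀ r ∈ I, HasDerivWithinAt v (v' r) I r)
    (hd2 : ∀ r ∈ I, HasDerivWithinAt v' (v'' r) I r)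
    (hc : ContinuousOn v'' I)
    (h0 : v 0 = 1) (h0' : v' 0 = 1)
    (hode : ∀ r ∈ I, v'' r
      = -l * (Real.sqrt (1 + (v' r) ^ 2) / (r ^ 2 + (v r) ^ 2) ^ (l / 2)
            + (r * v' r - v r) / (r ^ 2 + (v r) ^ 2)) * (1 + (v' r) ^ 2)) :
    ∃ δ₀ : ℝ, 0 < δ₀ ∧ δ₀ < 1 / Real.sqrt l ∧
      ∀ δ : ℝ, 0 < δ → δ < δ₀ → (δ : EReal) < T →
        ∀ r ∈ I, δ ≤ r →
          0 < v r - δ * v' r ∧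
          v r ≤ v δ * Real.exp (r / δ) ∧
          v' r ≤ (v δ / δ) * Real.exp (r / δ) :=
  solution_exponential_bound_general l hl T hT v v' v'' I hI hd1 hd2 h0 h0' hode
end
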